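/- arXiv:2511.18118 — 2 statements merged into one kernel-verified Lean document; each statement's English description precedes it below -/
import Mathlib

section
/- For every h ∈ ℂ with Re(h) > 0, every ε > 0 and every x ∈ ℝ with x ≠ 0, one has ∫_ℝ K_h^ε(ξ) · e^{i ξ x} dξ = |x|^h · e^{−ε|x|}, where |x|^h is the principal complex power of the positive real |x|; the integrand on the left is absolutely integrable since Re(h) > 0. -/
/-!
Let `f(t) = |t|^h e^{-ε|t|}`. Splitting at `0`, each half of its Fourier integral is a Laplace
transform `∫₀^∞ t^{s-1} e^{-at} dt = Γ(s) a^{-s}` with `s = h + 1`, `a = ε ± 2πiw`, so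
`𝓕 f (w) = 2π K_h^ε(2πw)`. As `f` is continuous and integrable and `K_h^ε` decays like
`|t|^{-(Re h + 1)}`, Fourier inversion at `x` gives the claim.
-/

open MeasureTheory

noncomputable def K (w : ℂ) (ε : ℝ) (t : ℝ) : ℂ :=
  Complex.Gamma (1 + w) / (2 * (Real.pi : ℂ)) *
    (((ε : ℂ) + Complex.I * (t : ℂ)) ^ (-(w + 1)) +
      ((ε : ℂ) - Complex.I * (t : ℂ)) ^ (-(w + 1)))

open Set Filter Complex Topology
open scoped FourierTransform Real

section Laplace

variable {s : ℂ}

lemma norm_cpow_mul_exp_neg_mul {t : ℝ} (ht : 0 < t) (a : ℂ) :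
    ‖(t : ℂ) ^ s * cexp (-(a * t))‖ = t ^ s.re * Real.exp (-(a.re * t)) := by
  rw [norm_mul, norm_cpow_eq_rpow_re_of_pos ht, norm_exp]
  simp

lemma integrableOn_cpow_mul_exp_neg_mul_Ioi (hs : 0 < s.re) {a : ℂ} (ha : 0 < a.re) :
    IntegrableOn (fun t : ℝ => (t : ℂ) ^ (s - 1) * cexp (-(a * t))) (Ioi 0) := by
  have hreal : IntegrableOn (fun t : ℝ => t ^ (s - 1).re * Real.exp (-(a.re * t))) (Ioi 0) := by
    simpa [Real.rpow_one, neg_mul] using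
      integrableOn_rpow_mul_exp_neg_mul_rpow (p := 1) (by simpa using hs) one_pos ha
  refine hreal.mono' (by fun_prop) ?_
  filter_upwards [ae_restrict_mem measurableSet_Ioi] with t ht
  exact (norm_cpow_mul_exp_neg_mul ht a).le

lemma differentiableOn_integral_cpow_mul_exp_neg_mul_Ioi (hs : 0 < s.re) :
    DifferentiableOn ℂ (fun a : ℂ => ∫ t : ℝ in Ioi 0, (t : ℂ) ^ (s - 1) * cexp (-(a * t)))
      {a | 0 < a.re} := by
  intro z₀ (hz₀ : 0 < z₀.re)
  have hc : 0 < ((z₀.re / 2 : ℝ) : ℂ).re := by simpa using hz₀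
  have hnhds : {z : ℂ | z₀.re / 2 < z.re} ∈ 𝓝 z₀ :=
    (isOpen_lt continuous_const continuous_re).mem_nhds (half_lt_self hz₀)
  refine (hasDerivAt_integral_of_dominated_loc_of_deriv_le (μ := volume.restrict (Ioi 0))
    (F := fun z (t : ℝ) => (t : ℂ) ^ (s - 1) * cexp (-(z * t)))
    (F' := fun z (t : ℝ) => (t : ℂ) ^ (s - 1) * (cexp (-(z * t)) * -t))
    (bound := fun t : ℝ => ‖(t : ℂ) ^ (s + 1 - 1) * cexp (-(((z₀.re / 2 : ℝ) : ℂ) * t))‖)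
    hnhds (Eventually.of_forall fun z => by fun_prop)
    (integrableOn_cpow_mul_exp_neg_mul_Ioi hs hz₀) (by fun_prop) ?_
    (integrableOn_cpow_mul_exp_neg_mul_Ioi (by simpa using hs.trans (lt_add_one _)) hc).norm
    ?_).2.differentiableAt.differentiableWithinAt
  · filter_upwards [ae_restrict_mem measurableSet_Ioi] with t (ht : 0 < t) z (hz : _ < _)
    have hpow : t ^ (s - 1).re * t = t ^ s.re := by
      rw [sub_re, one_re, ← Real.rpow_add_one ht.ne', sub_add_cancel]
    rw [add_sub_cancel_right, norm_cpow_mul_exp_neg_mul ht, ← mul_assoc, norm_mul,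
      norm_cpow_mul_exp_neg_mul ht, norm_neg, norm_real, Real.norm_of_nonneg ht.le,
      mul_right_comm, hpow]
    refine mul_le_mul_of_nonneg_left (Real.exp_le_exp.2 ?_) (by positivity)
    rw [ofReal_re]
    gcongr
  · filter_upwards with t z _
    exact ((hasDerivAt_mul_const (t : ℂ)).neg.cexp).const_mul _

/-- `Complex.integral_cpow_mul_exp_neg_mul_Ioi` is the case of real `a > 0`; both sides are
holomorphic in `a` on the right half-plane, so the identity theorem extends it. -/
lemma integral_cpow_mul_exp_neg_mul_Ioi_of_re_pos (hs : 0 < s.re) {a : ℂ} (ha : 0 < a.re) :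
    ∫ t : ℝ in Ioi 0, (t : ℂ) ^ (s - 1) * cexp (-(a * t)) = Gamma s * a ^ (-s) := by
  have hG : DifferentiableOn ℂ (fun a : ℂ => Gamma s * a ^ (-s)) {a | 0 < a.re} :=
    fun z hz => ((differentiableAt_id.cpow_const (Or.inl hz)).const_mul _).differentiableWithinAt
  have hreal : ∀ r : ℝ, 0 < r →
      ∫ t : ℝ in Ioi 0, (t : ℂ) ^ (s - 1) * cexp (-(r * t)) = Gamma s * (r : ℂ) ^ (-s) := by
    intro r hr
    rw [integral_cpow_mul_exp_neg_mul_Ioi hs hr, mul_comm, one_div,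
      inv_cpow _ _ (by rw [arg_ofReal_of_nonneg hr.le]; exact Real.pi_ne_zero.symm), cpow_neg]
  have hfreq : ∃ᶠ z in 𝓝[≠] (1 : ℂ),
      (∫ t : ℝ in Ioi 0, (t : ℂ) ^ (s - 1) * cexp (-(z * t))) = Gamma s * z ^ (-s) := by
    have hcont : Tendsto ((↑) : ℝ → ℂ) (𝓝[>] 1) (𝓝 1) := by
      simpa using (continuous_ofReal.tendsto 1).mono_left nhdsWithin_le_nhds
    have hlim : Tendsto ((↑) : ℝ → ℂ) (𝓝[>] 1) (𝓝[≠] 1) :=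
      tendsto_nhdsWithin_of_tendsto_nhds_of_eventually_within _ hcont
        (eventually_nhdsWithin_of_forall fun r (hr : 1 < r) => by simpa using hr.ne')
    refine hlim.frequently (Eventually.frequently ?_)
    filter_upwards [self_mem_nhdsWithin] with r (hr : 1 < r)
    exact hreal r (one_pos.trans hr)
  have hU : IsOpen {a : ℂ | 0 < a.re} := isOpen_lt continuous_const continuous_re
  exact AnalyticOnNhd.eqOn_of_preconnected_of_frequently_eq
    ((differentiableOn_integral_cpow_mul_exp_neg_mul_Ioi hs).analyticOnNhd hU)
    (hG.analyticOnNhd hU) (convex_halfSpace_re_gt 0).isPreconnected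
    (by simp : (1 : ℂ) ∈ {a : ℂ | 0 < a.re}) hfreq ha

end Laplace

lemma norm_cpow_le_rpow_mul_exp (z w : ℂ) :
    ‖z ^ w‖ ≤ ‖z‖ ^ w.re * Real.exp (π * |w.im|) := by
  refine (norm_cpow_le z w).trans ?_
  rw [div_eq_mul_inv, ← Real.exp_neg]
  gcongr
  calc -(arg z * w.im) ≤ |arg z| * |w.im| := by rw [← abs_mul]; exact neg_le_abs _
    _ ≤ π * |w.im| := by gcongr; exact abs_arg_le_pi z

lemma integrable_ofReal_add_I_mul_cpow_neg {ε : ℝ} (hε : 0 < ε) {w : ℂ} (hw : 1 < w.re) :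
    Integrable (fun t : ℝ => ((ε : ℂ) + I * t) ^ (-w)) := by
  set m := min ε 1
  have hm : 0 < m := lt_min hε one_pos
  have hlower (t : ℝ) : m / 2 * (1 + ‖t‖) ≤ ‖(ε : ℂ) + I * t‖ := by
    have hre : ε ≤ ‖(ε : ℂ) + I * t‖ := by
      simpa [abs_of_pos hε] using abs_re_le_norm ((ε : ℂ) + I * t)
    have him : |t| ≤ ‖(ε : ℂ) + I * t‖ := by simpa using abs_im_le_norm ((ε : ℂ) + I * t)
    rw [Real.norm_eq_abs]
    nlinarith [min_le_left ε 1, min_le_right ε 1, abs_nonneg t]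
  refine ((integrable_one_add_norm (E := ℝ) (μ := volume) (r := w.re)
    (by simpa using hw)).const_mul ((m / 2) ^ (-w.re) * Real.exp (π * |w.im|))).mono'
    (Measurable.aestronglyMeasurable (by fun_prop)) ?_
  refine Eventually.of_forall fun t => (norm_cpow_le_rpow_mul_exp _ _).trans ?_
  rw [neg_re, neg_im, abs_neg, mul_right_comm, ← Real.mul_rpow (by positivity) (by positivity)]
  exact mul_le_mul_of_nonneg_right
    (Real.rpow_le_rpow_of_nonpos (by positivity) (hlower t) (by linarith)) (by positivity)

lemma integrable_K {h : ℂ} (hh : 0 < h.re) {ε : ℝ} (hε : 0 < ε) : Integrable (K h ε) := by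
  have hplus := integrable_ofReal_add_I_mul_cpow_neg hε (w := h + 1) (by simpa using hh)
  have hminus : Integrable (fun t : ℝ => ((ε : ℂ) - I * t) ^ (-(h + 1))) := by
    simpa [← sub_eq_add_neg] using hplus.comp_neg
  exact (hplus.add hminus).const_mul _

lemma integrable_comp_abs_of_integrableOn_Ioi {E : Type*} [NormedAddCommGroup E] {g : ℝ → E}
    (hg : IntegrableOn g (Ioi 0)) : Integrable (fun t => g |t|) := by
  have hIoi : IntegrableOn (fun t => g |t|) (Ioi 0) :=
    hg.congr_fun (fun t (ht : 0 < t) => by rw [abs_of_pos ht]) measurableSet_Ioi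
  have hIic : IntegrableOn (fun t => g |t|) (Iic 0) := by
    have hneg : MeasurableEmbedding fun t : ℝ => -t := (Homeomorph.neg ℝ).measurableEmbedding
    rw [← Measure.map_neg_eq_self (volume : Measure ℝ), hneg.integrableOn_map_iff]
    simpa [Function.comp_def, integrableOn_Ici_iff_integrableOn_Ioi] using hIoi
  rw [← integrableOn_univ, ← Iic_union_Ioi (a := (0 : ℝ))]
  exact hIic.union hIoi

lemma integral_eq_integral_Ioi_add_integral_Ioi_comp_neg {E : Type*} [NormedAddCommGroup E]
    [NormedSpace ℝ E] {F : ℝ → E} (hF : Integrable F) :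
    ∫ t, F t = (∫ t in Ioi 0, F t) + ∫ t in Ioi 0, F (-t) := by
  rw [← intervalIntegral.integral_Iic_add_Ioi hF.integrableOn hF.integrableOn, add_comm,
    integral_comp_neg_Ioi, neg_zero]

lemma integral_ofReal_mul_comp_mul_left {g : ℝ → ℂ} {a : ℝ} (ha : 0 < a) :
    ∫ v, (a : ℂ) * g (a * v) = ∫ ξ, g ξ := by
  rw [integral_const_mul, Measure.integral_comp_mul_left, abs_of_pos (inv_pos.2 ha), real_smul,
    ofReal_inv, mul_inv_cancel_left₀ (ofReal_ne_zero.2 ha.ne')]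

noncomputable def powExpDecay (h : ℂ) (ε t : ℝ) : ℂ :=
  ((|t| : ℝ) : ℂ) ^ h * (Real.exp (-(ε * |t|)) : ℂ)

section powExpDecay

variable {h : ℂ} {ε : ℝ}

lemma exp_smul_powExpDecay {t : ℝ} (ht : 0 < t) (y : ℝ) :
    cexp (↑(-(y * t)) * I) • powExpDecay h ε t =
      (t : ℂ) ^ (h + 1 - 1) * cexp (-((ε + I * y) * t)) := by
  rw [powExpDecay, abs_of_pos ht, add_sub_cancel_right, smul_eq_mul, mul_left_comm,
    ofReal_exp, ← Complex.exp_add]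
  push_cast
  ring_nf

lemma integrable_powExpDecay (hh : 0 < h.re) (hε : 0 < ε) : Integrable (powExpDecay h ε) := by
  have hs : 0 < (h + 1).re := by simpa using hh.trans (lt_add_one _)
  refine integrable_comp_abs_of_integrableOn_Ioi
    (g := fun r : ℝ => (r : ℂ) ^ h * (Real.exp (-(ε * r)) : ℂ)) ?_
  exact (integrableOn_cpow_mul_exp_neg_mul_Ioi hs (a := ε) (by simpa using hε)).congr_fun
    (fun t _ => by simp) measurableSet_Ioi

lemma continuous_powExpDecay (hh : 0 < h.re) (ε : ℝ) : Continuous (powExpDecay h ε) := by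
  have hpow : Continuous fun t : ℝ => ((|t| : ℝ) : ℂ) ^ h :=
    continuous_iff_continuousAt.2 fun t => (continuousAt_cpow_const_of_re_pos
      (Or.inl (by simp)) hh).comp (continuous_ofReal.comp continuous_abs).continuousAt
  exact hpow.mul (by fun_prop)

lemma fourier_powExpDecay (hh : 0 < h.re) (hε : 0 < ε) (w : ℝ) :
    𝓕 (powExpDecay h ε) w = 2 * π * K h ε (2 * π * w) := by
  have hint : Integrable fun v : ℝ => cexp (↑(-2 * π * v * w) * I) • powExpDecay h ε v :=
    (integrable_powExpDecay hh hε).norm.mono'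
      (((by fun_prop : Continuous fun v : ℝ => cexp (↑(-2 * π * v * w) * I)).smul
        (continuous_powExpDecay hh ε)).aestronglyMeasurable)
      (Eventually.of_forall fun v => by rw [norm_smul, norm_exp_ofReal_mul_I, one_mul])
  have hs : 0 < (h + 1).re := by simpa using hh.trans (lt_add_one _)
  rw [Real.fourier_real_eq_integral_exp_smul,
    integral_eq_integral_Ioi_add_integral_Ioi_comp_neg hint]
  have hpos : ∫ t in Ioi 0, cexp (↑(-2 * π * t * w) * I) • powExpDecay h ε t =
      Gamma (h + 1) * ((ε : ℂ) + I * ↑(2 * π * w)) ^ (-(h + 1)) := by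
    rw [← integral_cpow_mul_exp_neg_mul_Ioi_of_re_pos hs (by simpa using hε)]
    refine setIntegral_congr_fun measurableSet_Ioi fun t (ht : 0 < t) => ?_
    rw [show -2 * π * t * w = -(2 * π * w * t) by ring, exp_smul_powExpDecay ht]
  have hneg : ∫ t in Ioi 0, cexp (↑(-2 * π * -t * w) * I) • powExpDecay h ε (-t) =
      Gamma (h + 1) * ((ε : ℂ) - I * ↑(2 * π * w)) ^ (-(h + 1)) := by
    rw [← integral_cpow_mul_exp_neg_mul_Ioi_of_re_pos hs (by simpa using hε)]
    refine setIntegral_congr_fun measurableSet_Ioi fun t (ht : 0 < t) => ?_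
    rw [powExpDecay, abs_neg, ← powExpDecay,
      show -2 * π * -t * w = -(-(2 * π * w) * t) by ring, exp_smul_powExpDecay ht,
      ofReal_neg, mul_neg, ← sub_eq_add_neg]
  rw [hpos, hneg, K, add_comm 1 h]
  field_simp

end powExpDecay

theorem stmt_2_general (h : ℂ) (hh : 0 < h.re) (ε : ℝ) (hε : 0 < ε) (x : ℝ) :
    (∫ ξ : ℝ, K h ε ξ * Complex.exp (Complex.I * (ξ : ℂ) * (x : ℂ))) =
      ((|x| : ℝ) : ℂ) ^ h * (Real.exp (-(ε * |x|)) : ℂ) := by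
  have hF : 𝓕 (powExpDecay h ε) = fun w => 2 * π * K h ε (2 * π * w) :=
    funext (fourier_powExpDecay hh hε)
  have hFint : Integrable (𝓕 (powExpDecay h ε)) := by
    rw [hF]
    exact ((integrable_K hh hε).comp_mul_left' (by positivity)).const_mul _
  calc ∫ ξ : ℝ, K h ε ξ * cexp (I * ξ * x)
      = ∫ v : ℝ, ((2 * π : ℝ) : ℂ) * (K h ε (2 * π * v) * cexp (I * ↑(2 * π * v) * x)) :=
        (integral_ofReal_mul_comp_mul_left (g := fun ξ : ℝ => K h ε ξ * cexp (I * ξ * x))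
          (by positivity)).symm
    _ = ∫ v : ℝ, cexp (↑(-2 * π * v * -x) * I) • 𝓕 (powExpDecay h ε) v := by
        congr 1 with v
        rw [hF, smul_eq_mul]
        push_cast
        ring_nf
    _ = 𝓕⁻ (𝓕 (powExpDecay h ε)) x := by
        rw [Real.fourierInv_eq_fourier_neg, Real.fourier_real_eq_integral_exp_smul]
    _ = powExpDecay h ε x :=
        (integrable_powExpDecay hh hε).fourierInv_fourier_eq hFint
          (continuous_powExpDecay hh ε).continuousAt

/-- For every `h ∈ ℂ` with `Re h > 0`, every `ε > 0` and every `x ≠ 0`,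
`∫_ℝ K_h^ε(ξ) e^{iξx} dξ = |x|^h e^{-ε|x|}`. -/
theorem stmt_2 (h : ℂ) (hh : 0 < h.re) (ε : ℝ) (hε : 0 < ε) (x : ℝ) (hx : x ≠ 0) :
    (∫ ξ : ℝ, K h ε ξ * Complex.exp (Complex.I * (ξ : ℂ) * (x : ℂ))) =
      ((|x| : ℝ) : ℂ) ^ h * (Real.exp (-(ε * |x|)) : ℂ) :=
  stmt_2_general h hh ε hε x
end

section
/- Let m ∈ ℕ and set n = 2m. Let u : ℝ → ℂ be n-times continuously differentiable and suppose there are constants C, c > 0 such that ‖u^{(k)}(t)‖ ≤ C·e^{−c t} for all t ≥ 0 and all 0 ≤ k ≤ n, and that u^{(k)}(0) = 0 for every odd k with k < n. Then lim_{ε↓0} ∫_0^∞ K_n^ε(t) · u(t) dt = ((−1)^m / 2) · u^{(n)}(0). -/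
/-!
With principal powers, `K_n^ε(t) = n!/(2π) ((ε + it)^{-(n+1)} + (ε - it)^{-(n+1)})` for `n ∈ ℕ`.
Since `d/dt (ε ± it)^{-(k+1)} = ∓(k+1) i (ε ± it)^{-(k+2)}`, integrating by parts `n` times
moves all derivatives onto `u` at the cost of the factor `n! iⁿ = n! (-1)^m`; the boundary terms
at `t = 0` coming from the two kernels cancel for derivatives of even order and vanish by
hypothesis for odd order. What remains is `(-1)^m/π ∫₀^∞ ε/(ε² + t²) u⁽ⁿ⁾(t) dt`, and the half Poisson kernel
`ε/(ε² + t²)` on `(0, ∞)` has mass `π/2` and concentrates at `0` as `ε ↓ 0`.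
-/

open MeasureTheory

open Complex Set Filter Topology
open scoped Nat

noncomputable def kernelPow (σ ε : ℝ) (k : ℕ) (t : ℝ) : ℂ :=
  ((ε : ℂ) + σ * I * t) ^ (-(k + 1 : ℤ))

variable {σ ε : ℝ}

lemma le_norm_ofReal_add_mul_I (σ ε t : ℝ) : ε ≤ ‖(ε : ℂ) + σ * I * t‖ := by
  refine (le_abs_self ε).trans ((abs_re_le_norm _).trans_eq' ?_)
  simp

lemma ofReal_add_mul_I_ne_zero (hε : 0 < ε) (t : ℝ) : (ε : ℂ) + σ * I * t ≠ 0 :=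
  norm_pos_iff.mp (hε.trans_le (le_norm_ofReal_add_mul_I σ ε t))

lemma hasDerivAt_kernelPow (hε : 0 < ε) (k : ℕ) (t : ℝ) :
    HasDerivAt (kernelPow σ ε k) (-(k + 1) * σ * I * kernelPow σ ε (k + 1) t) t := by
  have hlin : HasDerivAt (fun s : ℝ => (ε : ℂ) + σ * I * s) (σ * I) t := by
    simpa using ((ofRealCLM.hasDerivAt (x := t)).const_mul ((σ : ℂ) * I)).const_add (ε : ℂ)
  refine ((hasDerivAt_zpow (-(k + 1 : ℤ)) _
    (Or.inl (ofReal_add_mul_I_ne_zero hε t))).comp t hlin).congr_deriv ?_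
  rw [kernelPow, show -(k + 1 : ℤ) - 1 = -((k + 1 : ℕ) + 1 : ℤ) by push_cast; ring]
  push_cast
  ring

lemma continuous_kernelPow (hε : 0 < ε) (k : ℕ) : Continuous (kernelPow σ ε k) :=
  continuous_iff_continuousAt.2 fun t => (hasDerivAt_kernelPow hε k t).continuousAt

lemma norm_kernelPow_le (hε : 0 < ε) (k : ℕ) (t : ℝ) :
    ‖kernelPow σ ε k t‖ ≤ (ε ^ (k + 1))⁻¹ := by
  rw [kernelPow, norm_zpow, zpow_neg, ← Nat.cast_succ, zpow_natCast]
  exact inv_anti₀ (pow_pos hε _) (pow_le_pow_left₀ hε.le (le_norm_ofReal_add_mul_I σ ε t) _)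

lemma kernelPow_zero_right (σ ε : ℝ) (k : ℕ) : kernelPow σ ε k 0 = (ε : ℂ) ^ (-(k + 1 : ℤ)) := by
  simp [kernelPow]

lemma integrableOn_kernelPow_mul (hε : 0 < ε) (k : ℕ) {g : ℝ → ℂ}
    (hg : IntegrableOn g (Ioi 0)) : IntegrableOn (fun t => kernelPow σ ε k t * g t) (Ioi 0) :=
  hg.bdd_mul (continuous_kernelPow hε k).aestronglyMeasurable
    (ae_of_all _ (norm_kernelPow_le hε k))

lemma tendsto_kernelPow_mul_atTop (hε : 0 < ε) (k : ℕ) {g : ℝ → ℂ}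
    (hg : Tendsto g atTop (𝓝 0)) : Tendsto (fun t => kernelPow σ ε k t * g t) atTop (𝓝 0) :=
  isBoundedUnder_le_mul_tendsto_zero
    (isBoundedUnder_of ⟨_, fun t => norm_kernelPow_le hε k t⟩) hg

lemma integral_kernelPow_succ_mul (hε : 0 < ε) (k : ℕ) {g g' : ℝ → ℂ}
    (hderiv : ∀ t, HasDerivAt g (g' t) t) (hg : IntegrableOn g (Ioi 0))
    (hg' : IntegrableOn g' (Ioi 0)) (hlim : Tendsto g atTop (𝓝 0)) :
    (k + 1) * σ * I * ∫ t in Ioi 0, kernelPow σ ε (k + 1) t * g t =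
      (∫ t in Ioi 0, kernelPow σ ε k t * g' t) + (ε : ℂ) ^ (-(k + 1 : ℤ)) * g 0 := by
  have hF : ∀ t, HasDerivAt (fun s => kernelPow σ ε k s * g s)
      (-(k + 1) * σ * I * (kernelPow σ ε (k + 1) t * g t) + kernelPow σ ε k t * g' t) t :=
    fun t => ((hasDerivAt_kernelPow hε k t).mul (hderiv t)).congr_deriv (by ring)
  have hint₁ := (integrableOn_kernelPow_mul (σ := σ) hε (k + 1) hg).const_mul (-(k + 1) * σ * I)
  have hint₂ := integrableOn_kernelPow_mul (σ := σ) hε k hg'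
  have hparts := integral_Ioi_of_hasDerivAt_of_tendsto' (fun t _ => hF t) (hint₁.add hint₂)
    (tendsto_kernelPow_mul_atTop hε k hlim)
  rw [integral_add hint₁ hint₂, integral_const_mul, kernelPow_zero_right] at hparts
  linear_combination -hparts

lemma hasDerivAt_iteratedDeriv {n : ℕ} {u : ℝ → ℂ} (hu : ContDiff ℝ n u) {j : ℕ} (hj : j < n)
    (t : ℝ) : HasDerivAt (iteratedDeriv j u) (iteratedDeriv (j + 1) u t) t := by
  rw [iteratedDeriv_succ]
  exact (hu.differentiable_iteratedDeriv j (mod_cast hj) t).hasDerivAt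

noncomputable def kernelPairing (ε : ℝ) (k j : ℕ) (u : ℝ → ℂ) : ℂ :=
  (∫ t in Ioi 0, kernelPow 1 ε k t * iteratedDeriv j u t) +
    (-1) ^ j * ∫ t in Ioi 0, kernelPow (-1) ε k t * iteratedDeriv j u t

/-- The boundary terms at `0` of the two integrations by parts cancel for even `j`. -/
lemma kernelPairing_succ_left (hε : 0 < ε) (k : ℕ) {j : ℕ} {u : ℝ → ℂ}
    (hderiv : ∀ t, HasDerivAt (iteratedDeriv j u) (iteratedDeriv (j + 1) u t) t)
    (hint : IntegrableOn (iteratedDeriv j u) (Ioi 0))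
    (hint' : IntegrableOn (iteratedDeriv (j + 1) u) (Ioi 0))
    (hlim : Tendsto (iteratedDeriv j u) atTop (𝓝 0))
    (hzero : Even j ∨ iteratedDeriv j u 0 = 0) :
    (k + 1) * I * kernelPairing ε (k + 1) j u = kernelPairing ε k (j + 1) u := by
  have hplus := integral_kernelPow_succ_mul (σ := 1) hε k hderiv hint hint' hlim
  have hminus := integral_kernelPow_succ_mul (σ := -1) hε k hderiv hint hint' hlim
  have hboundary : (1 - (-1) ^ j) * iteratedDeriv j u 0 = 0 := by
    rcases hzero with heven | hzero
    · simp [heven.neg_one_pow]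
    · simp [hzero]
  simp only [kernelPairing]
  push_cast at hplus hminus
  linear_combination hplus - (-1) ^ j * hminus + (ε : ℂ) ^ (-(k + 1 : ℤ)) * hboundary

lemma factorial_mul_I_pow_mul_kernelPairing (hε : 0 < ε) {n : ℕ} {u : ℝ → ℂ}
    (hu : ContDiff ℝ n u) (hint : ∀ j ≤ n, IntegrableOn (iteratedDeriv j u) (Ioi 0))
    (hlim : ∀ j < n, Tendsto (iteratedDeriv j u) atTop (𝓝 0))
    (hodd : ∀ j, Odd j → j < n → iteratedDeriv j u 0 = 0) (k j : ℕ) (hjk : j + k = n) :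
    (k ! : ℂ) * I ^ k * kernelPairing ε k j u = kernelPairing ε 0 n u := by
  induction k generalizing j with
  | zero => simp [← hjk]
  | succ k ih =>
    have hj : j < n := by omega
    have hstep := kernelPairing_succ_left hε k (hasDerivAt_iteratedDeriv hu hj)
      (hint j hj.le) (hint (j + 1) hj) (hlim j hj)
      ((Nat.even_or_odd j).imp_right fun hodd_j => hodd j hodd_j hj)
    rw [← ih (j + 1) (by omega), ← hstep, Nat.factorial_succ, pow_succ]
    push_cast
    ring

lemma K_natCast (n : ℕ) (ε t : ℝ) :
    K n ε t = n ! / (2 * Real.pi) * (kernelPow 1 ε n t + kernelPow (-1) ε n t) := by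
  rw [K, add_comm, Complex.Gamma_nat_eq_factorial,
    show -((n : ℂ) + 1) = ((-(n + 1 : ℤ) : ℤ) : ℂ) by push_cast; ring,
    cpow_intCast, cpow_intCast, kernelPow, kernelPow]
  push_cast
  ring_nf

lemma kernelPow_one_add_kernelPow_neg_one (hε : 0 < ε) (t : ℝ) :
    kernelPow 1 ε 0 t + kernelPow (-1) ε 0 t = 2 * ((ε / (ε ^ 2 + t ^ 2) : ℝ) : ℂ) := by
  have hplus := ofReal_add_mul_I_ne_zero (σ := 1) hε t
  have hminus := ofReal_add_mul_I_ne_zero (σ := -1) hε t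
  have hnorm : ((ε ^ 2 + t ^ 2 : ℝ) : ℂ) ≠ 0 := ofReal_ne_zero.mpr (by positivity)
  simp only [kernelPow, CharP.cast_eq_zero, zero_add, zpow_neg_one]
  rw [inv_add_inv hplus hminus, ofReal_div, mul_div_assoc', div_eq_div_iff
    (mul_ne_zero hplus hminus) hnorm]
  push_cast
  linear_combination (2 * ε * t ^ 2 : ℂ) * I_sq

lemma integral_K_natCast_mul (hε : 0 < ε) (n : ℕ) {g : ℝ → ℂ} (hg : IntegrableOn g (Ioi 0)) :
    ∫ t in Ioi 0, K n ε t * g t = n ! / (2 * Real.pi) * kernelPairing ε n 0 g := by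
  simp only [K_natCast, mul_assoc, add_mul]
  rw [integral_const_mul, integral_add (integrableOn_kernelPow_mul hε n hg)
    (integrableOn_kernelPow_mul hε n hg)]
  simp [kernelPairing]

lemma kernelPairing_zero_left (hε : 0 < ε) {n : ℕ} (hn : Even n) {u : ℝ → ℂ}
    (hint : IntegrableOn (iteratedDeriv n u) (Ioi 0)) :
    kernelPairing ε 0 n u =
      2 * ∫ t in Ioi 0, ((ε / (ε ^ 2 + t ^ 2) : ℝ) : ℂ) * iteratedDeriv n u t := by
  rw [kernelPairing, hn.neg_one_pow, one_mul, ← integral_const_mul,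
    ← integral_add (integrableOn_kernelPow_mul hε 0 hint) (integrableOn_kernelPow_mul hε 0 hint)]
  congr 1 with t
  rw [← add_mul, kernelPow_one_add_kernelPow_neg_one hε, mul_assoc]

lemma integral_poisson_mul_eq (hε : 0 < ε) (G : ℝ → ℂ) :
    ∫ t in Ioi 0, ((ε / (ε ^ 2 + t ^ 2) : ℝ) : ℂ) * G t =
      ∫ s in Ioi 0, (((1 + s ^ 2)⁻¹ : ℝ) : ℂ) * G (ε * s) := by
  have hsubst :=
    integral_comp_mul_left_Ioi' (fun t => ((ε / (ε ^ 2 + t ^ 2) : ℝ) : ℂ) * G t) 0 hε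
  rw [mul_zero] at hsubst
  rw [← hsubst, ← integral_smul]
  congr 1 with s
  rw [real_smul, ← mul_assoc, ← ofReal_mul]
  congr 2
  field_simp

lemma integral_inv_one_add_sq_mul (z : ℂ) :
    ∫ s in Ioi (0 : ℝ), (((1 + s ^ 2)⁻¹ : ℝ) : ℂ) * z = ((Real.pi / 2 : ℝ) : ℂ) * z := by
  rw [integral_mul_const, integral_complex_ofReal, integral_Ioi_inv_one_add_sq, Real.arctan_zero,
    sub_zero]

lemma tendsto_integral_poisson_mul {G : ℝ → ℂ} (hG : Continuous G) {M : ℝ}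
    (hM : ∀ t, 0 ≤ t → ‖G t‖ ≤ M) :
    Tendsto (fun ε : ℝ => ∫ t in Ioi 0, ((ε / (ε ^ 2 + t ^ 2) : ℝ) : ℂ) * G t) (𝓝[>] 0)
      (𝓝 (((Real.pi / 2 : ℝ) : ℂ) * G 0)) := by
  rw [← integral_inv_one_add_sq_mul]
  refine Tendsto.congr' (eventually_nhdsWithin_of_forall fun ε hε =>
    (integral_poisson_mul_eq hε G).symm) ?_
  have hweight : Continuous fun s : ℝ => (((1 + s ^ 2)⁻¹ : ℝ) : ℂ) :=
    continuous_ofReal.comp (by fun_prop (disch := intro s; positivity))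
  refine tendsto_integral_filter_of_dominated_convergence (fun s => (1 + s ^ 2)⁻¹ * M)
    (Eventually.of_forall fun ε =>
      (hweight.mul (hG.comp (continuous_const_mul ε))).aestronglyMeasurable)
    ?_ (integrable_inv_one_add_sq.mul_const M).integrableOn
    (ae_of_all _ fun s => (tendsto_const_nhds.mul ((hG.comp (continuous_mul_const s)).tendsto' 0
      (G 0) (by simp))).mono_left nhdsWithin_le_nhds)
  filter_upwards [self_mem_nhdsWithin] with ε hε
  filter_upwards [ae_restrict_mem measurableSet_Ioi] with s hs
  rw [norm_mul, norm_real, Real.norm_of_nonneg (by positivity)]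
  exact mul_le_mul_of_nonneg_left (hM _ (mul_pos hε hs).le) (by positivity)

lemma integral_K_mul_eq_integral_poisson_mul (hε : 0 < ε) (m : ℕ) {u : ℝ → ℂ}
    (hu : ContDiff ℝ (2 * m : ℕ) u)
    (hint : ∀ j ≤ 2 * m, IntegrableOn (iteratedDeriv j u) (Ioi 0))
    (hlim : ∀ j < 2 * m, Tendsto (iteratedDeriv j u) atTop (𝓝 0))
    (hodd : ∀ j, Odd j → j < 2 * m → iteratedDeriv j u 0 = 0) :
    ∫ t in Ioi 0, K ((2 * m : ℕ) : ℂ) ε t * u t =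
      (-1) ^ m / Real.pi *
        ∫ t in Ioi 0, ((ε / (ε ^ 2 + t ^ 2) : ℝ) : ℂ) * iteratedDeriv (2 * m) u t := by
  have hpairing := factorial_mul_I_pow_mul_kernelPairing hε hu hint hlim hodd (2 * m) 0 (zero_add _)
  rw [kernelPairing_zero_left hε (even_two_mul m) (hint _ le_rfl), pow_mul, I_sq] at hpairing
  have hsq : ((-1 : ℂ) ^ m) ^ 2 = 1 := by rw [← pow_mul, pow_mul', neg_one_sq, one_pow]
  rw [integral_K_natCast_mul hε _ (by simpa using hint 0 (Nat.zero_le _))]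
  linear_combination (-1) ^ m / (2 * Real.pi) * hpairing -
    ((2 * m) ! / (2 * Real.pi) * kernelPairing ε (2 * m) 0 u : ℂ) * hsq

lemma integrableOn_Ioi_of_norm_le_exp {f : ℝ → ℂ} (hf : Continuous f) {C c : ℝ} (hc : 0 < c)
    (hb : ∀ t, 0 ≤ t → ‖f t‖ ≤ C * Real.exp (-c * t)) : IntegrableOn f (Ioi 0) :=
  ((exp_neg_integrableOn_Ioi 0 hc).const_mul C).mono' hf.aestronglyMeasurable
    (ae_restrict_of_forall_mem measurableSet_Ioi fun t ht => hb t (le_of_lt ht))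

lemma tendsto_zero_of_norm_le_exp {f : ℝ → ℂ} {C c : ℝ} (hc : 0 < c)
    (hb : ∀ t, 0 ≤ t → ‖f t‖ ≤ C * Real.exp (-c * t)) : Tendsto f atTop (𝓝 0) := by
  refine squeeze_zero_norm' (eventually_atTop.2 ⟨0, hb⟩) ?_
  simpa [neg_mul] using
    (Real.tendsto_exp_neg_atTop_nhds_zero.comp (tendsto_id.const_mul_atTop hc)).const_mul C

lemma norm_le_of_norm_le_exp {f : ℝ → ℂ} {C c : ℝ} (hc : 0 ≤ c)
    (hb : ∀ t, 0 ≤ t → ‖f t‖ ≤ C * Real.exp (-c * t)) (t : ℝ) (ht : 0 ≤ t) : ‖f t‖ ≤ C := by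
  have hC : 0 ≤ C := by simpa using (norm_nonneg _).trans (hb 0 le_rfl)
  exact (hb t ht).trans (mul_le_of_le_one_right hC (Real.exp_le_one_iff.2 (by nlinarith)))

theorem stmt_12_general (m : ℕ) (u : ℝ → ℂ) (hu : ContDiff ℝ (2 * m : ℕ) u)
    (C c : ℝ) (hc : 0 < c)
    (hbound : ∀ k ≤ 2 * m, ∀ t : ℝ, 0 ≤ t →
      ‖iteratedDeriv k u t‖ ≤ C * Real.exp (-c * t))
    (hodd : ∀ k, Odd k → k < 2 * m → iteratedDeriv k u 0 = 0) :
    Filter.Tendsto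
      (fun ε : ℝ => ∫ t in Set.Ioi (0 : ℝ), K ((2 * m : ℕ) : ℂ) ε t * u t)
      (nhdsWithin 0 (Set.Ioi 0))
      (nhds (((-1 : ℂ) ^ m / 2) * iteratedDeriv (2 * m) u 0)) := by
  have hcont : ∀ j ≤ 2 * m, Continuous (iteratedDeriv j u) := fun j hj =>
    hu.continuous_iteratedDeriv j (mod_cast hj)
  have hint : ∀ j ≤ 2 * m, IntegrableOn (iteratedDeriv j u) (Ioi 0) := fun j hj =>
    integrableOn_Ioi_of_norm_le_exp (hcont j hj) hc (hbound j hj)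
  have hlim : ∀ j < 2 * m, Tendsto (iteratedDeriv j u) atTop (𝓝 0) := fun j hj =>
    tendsto_zero_of_norm_le_exp hc (hbound j hj.le)
  have hpoisson := (tendsto_integral_poisson_mul (hcont _ le_rfl)
    (norm_le_of_norm_le_exp hc.le (hbound _ le_rfl))).const_mul ((-1 : ℂ) ^ m / Real.pi)
  have hπ : (Real.pi : ℂ) ≠ 0 := ofReal_ne_zero.mpr Real.pi_ne_zero
  rw [show (-1 : ℂ) ^ m / 2 * iteratedDeriv (2 * m) u 0 =
      (-1) ^ m / Real.pi * (((Real.pi / 2 : ℝ) : ℂ) * iteratedDeriv (2 * m) u 0) by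
    push_cast; field_simp]
  exact hpoisson.congr' (eventually_nhdsWithin_of_forall fun ε (hε : 0 < ε) =>
    (integral_K_mul_eq_integral_poisson_mul hε m hu hint hlim hodd).symm)

/-- Let `n = 2m` and let `u : ℝ → ℂ` be `n`-times continuously
differentiable with all derivatives of order `≤ n` exponentially decaying on `[0,∞)`,
and with `u^{(k)}(0) = 0` for every odd `k < n`. Then
`lim_{ε↓0} ∫_0^∞ K_n^ε(t) u(t) dt = ((-1)^m/2) u^{(n)}(0)`. -/
theorem stmt_12 (m : ℕ) (u : ℝ → ℂ) (hu : ContDiff ℝ (2 * m : ℕ) u)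
    (C c : ℝ) (hC : 0 < C) (hc : 0 < c)
    (hbound : ∀ k ≤ 2 * m, ∀ t : ℝ, 0 ≤ t →
      ‖iteratedDeriv k u t‖ ≤ C * Real.exp (-c * t))
    (hodd : ∀ k, Odd k → k < 2 * m → iteratedDeriv k u 0 = 0) :
    Filter.Tendsto
      (fun ε : ℝ => ∫ t in Set.Ioi (0 : ℝ), K ((2 * m : ℕ) : ℂ) ε t * u t)
      (nhdsWithin 0 (Set.Ioi 0))
      (nhds (((-1 : ℂ) ^ m / 2) * iteratedDeriv (2 * m) u 0)) :=
  stmt_12_general m u hu C c hc hbound hodd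
end
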